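/- arXiv:1011.3986 — 4 statements merged into one kernel-verified Lean document; each statement's English description precedes it below -/
import Mathlib

section
/- Let l, r be unit quaternions with Re(l) = Re(r). Then the map [l,r] fixes the quaternions l - r̄ and 1 - l̄·r̄, i.e. l̄·(l - r̄)·r = l - r̄ and l̄·(1 - l̄·r̄)·r = 1 - l̄·r̄. -/
noncomputable section

open Quaternion

/-- A single rotation `[l,r]` (unit quaternions with `Re l = Re r`) fixes the
quaternions `l - r̄` and `1 - l̄ r̄`. -/
theorem single_rotation_fixed_vectors (l r : Quaternion ℝ) (hl : ‖l‖ = 1) (hr : ‖r‖ = 1)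
    (hre : l.re = r.re) :
    star l * (l - star r) * r = l - star r ∧
    star l * (1 - star l * star r) * r = 1 - star l * star r := by
  have hl1 : star l * l = 1 := by
    have h := Quaternion.star_mul_self l
    rw [Quaternion.normSq_eq_norm_mul_self, hl] at h
    simpa using h
  have hr1 : star r * r = 1 := by
    have h := Quaternion.star_mul_self r
    rw [Quaternion.normSq_eq_norm_mul_self, hr] at h
    simpa using h
  have hkey : l + star l = r + star r := by
    rw [Quaternion.self_add_star, Quaternion.self_add_star, hre]
  constructor
  · calc star l * (l - star r) * r
        = (star l * l) * r - star l * (star r * r) := by noncomm_ring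
      _ = r - star l := by rw [hl1, hr1, one_mul, mul_one]
      _ = l - star r := by rw [sub_eq_sub_iff_add_eq_add]; exact hkey.symm
  · calc star l * (1 - star l * star r) * r
        = star l * r - star l * (star l * (star r * r)) := by noncomm_ring
      _ = star l * r - star l * star l := by rw [hr1, mul_one]
      _ = 1 - star l * star r := by
          rw [sub_eq_sub_iff_add_eq_add]
          have h2 : star l * r + star l * star r = star l * l + star l * star l := by
            rw [← mul_add, ← mul_add, hkey]
          rw [hl1] at h2
          exact h2
end
end

section
/- Let V be a nontrivial finite-dimensional real inner product space, G a group, and ρ a homomorphism from G into the group of linear isometric automorphisms of V (an orthogonal representation). Suppose that every orthogonal linear map A : V → V which commutes with ρ(g) for all g ∈ G satisfies A = id or A = -id. Then the representation is absolutely irreducible: every ℝ-linear map B : V → V that commutes with ρ(g) for all g ∈ G is a real scalar multiple of the identity. -/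
/-!
Every orthogonal reflection `K.reflection` in a `ρ`-invariant subspace `K` commutes with `ρ`, so
the hypothesis forces such a `K` to be `⊥` or `⊤`. Applied to an eigenspace of a symmetric
operator commuting with `ρ`, this shows that such an operator is a scalar. For an arbitrary
commuting `B`, the symmetric operator `B† B` also commutes with `ρ`, hence equals `c • id`; so
for `c ≠ 0` the map `B / √c` is an orthogonal map commuting with `ρ` and therefore `± id`.
-/

theorem Submodule.map_linearEquiv_eq_of_mapsTo {K M : Type*} [DivisionRing K] [AddCommGroup M]
    [Module K M] [FiniteDimensional K M] (e : M ≃ₗ[K] M) (N : Submodule K M)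
    (h : Set.MapsTo e N N) : N.map (e : M →ₗ[K] M) = N :=
  Submodule.eq_of_le_of_finrank_eq (Submodule.map_le_iff_le_comap.mpr h)
    (LinearEquiv.finrank_map_eq e N)

section

open Module LinearMap

section RCLike

variable {𝕜 E : Type*} [RCLike 𝕜] [NormedAddCommGroup E] [InnerProductSpace 𝕜 E]
  [FiniteDimensional 𝕜 E]

theorem Submodule.reflection_apply_comm_of_mapsTo (U : E ≃ₗᵢ[𝕜] E) (K : Submodule 𝕜 E)
    (hK : Set.MapsTo U K K) (v : E) : K.reflection (U v) = U (K.reflection v) := by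
  have := K.reflection_map_apply U (U v)
  simpa only [K.map_linearEquiv_eq_of_mapsTo U.toLinearEquiv hK, U.symm_apply_apply] using this

theorem LinearMap.adjoint_apply_comm (U : E ≃ₗᵢ[𝕜] E) {B : E →ₗ[𝕜] E}
    (hB : ∀ v, B (U v) = U (B v)) (v : E) : adjoint B (U v) = U (adjoint B v) := by
  refine ext_inner_right 𝕜 fun w => ?_
  calc inner 𝕜 (adjoint B (U v)) w = inner 𝕜 v (U.symm (B w)) := by
        rw [adjoint_inner_left, U.inner_map_eq_flip]
    _ = inner 𝕜 v (B (U.symm w)) := by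
        rw [U.symm_apply_eq.mpr (by rw [← hB, U.apply_symm_apply])]
    _ = inner 𝕜 (U (adjoint B v)) w := by rw [← adjoint_inner_left, U.inner_map_eq_flip]

end RCLike

variable {V : Type*} [NormedAddCommGroup V] [InnerProductSpace ℝ V] [FiniteDimensional ℝ V]

theorem LinearMap.norm_apply_eq_of_adjoint_mul_self_eq {B : V →ₗ[ℝ] V} {c : ℝ}
    (hB : adjoint B * B = c • LinearMap.id) (v : V) : ‖B v‖ = √c * ‖v‖ := by
  have hsq : ‖B v‖ ^ 2 = c * ‖v‖ ^ 2 := by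
    rw [← real_inner_self_eq_norm_sq, ← real_inner_self_eq_norm_sq, ← adjoint_inner_left,
      ← Module.End.mul_apply, hB, smul_apply, id_apply, real_inner_smul_left]
  rw [← Real.sqrt_sq (norm_nonneg (B v)), hsq, Real.sqrt_mul' _ (sq_nonneg _),
    Real.sqrt_sq (norm_nonneg v)]

section OrthogonalCommutant

variable {ι : Type*} {ρ : ι → V ≃ₗᵢ[ℝ] V}
  (hρ : ∀ A : V ≃ₗᵢ[ℝ] V, (∀ i v, A (ρ i v) = ρ i (A v)) → (∀ v, A v = v) ∨ (∀ v, A v = -v))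
include hρ

theorem LinearMap.IsSymmetric.exists_eq_smul_id_of_comm [Nontrivial V] {S : V →ₗ[ℝ] V}
    (hS : S.IsSymmetric) (hSρ : ∀ i v, S (ρ i v) = ρ i (S v)) :
    ∃ μ : ℝ, S = μ • LinearMap.id := by
  obtain ⟨μ, hμ⟩ : ∃ μ, End.HasEigenvalue S μ := ⟨_, hS.hasEigenvalue_iSup_of_finiteDimensional⟩
  set K := End.eigenspace S μ
  have hKρ : ∀ i v, K.reflection (ρ i v) = ρ i (K.reflection v) := fun i =>
    K.reflection_apply_comm_of_mapsTo (ρ i)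
      (End.mapsTo_genEigenspace_of_comm (LinearMap.ext (hSρ i)) μ 1)
  rcases hρ K.reflection hKρ with hid | hneg
  · exact ⟨μ, LinearMap.ext fun v => End.mem_eigenspace_iff.mp
      ((K.reflection_eq_self_iff v).mp (hid v))⟩
  · refine absurd ((Submodule.eq_bot_iff K).mpr fun v hv => ?_) hμ
    have := hneg v
    rw [K.reflection_mem_subspace_eq_self hv, eq_neg_iff_add_eq_zero, ← two_smul ℝ] at this
    exact (smul_eq_zero.mp this).resolve_left two_ne_zero

theorem exists_eq_smul_id_of_norm_apply_eq {B : V →ₗ[ℝ] V} (hBρ : ∀ i v, B (ρ i v) = ρ i (B v))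
    {r : ℝ} (hr : 0 ≤ r) (hB : ∀ v, ‖B v‖ = r * ‖v‖) : ∃ c : ℝ, B = c • LinearMap.id := by
  rcases hr.eq_or_lt with rfl | hr
  · exact ⟨0, LinearMap.ext fun v => by simpa using hB v⟩
  let A : V →ₗᵢ[ℝ] V :=
    { toLinearMap := r⁻¹ • B
      norm_map' := fun v => by simp [norm_smul, hB, hr.ne', abs_of_pos hr] }
  rcases hρ (A.toLinearIsometryEquiv rfl) (fun i v => by simp [A, hBρ]) with hA | hA
  · refine ⟨r, LinearMap.ext fun v => ?_⟩
    simpa [A, hr.ne', smul_smul] using congrArg (r • ·) (hA v)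
  · refine ⟨-r, LinearMap.ext fun v => ?_⟩
    simpa [A, hr.ne', smul_smul] using congrArg (r • ·) (hA v)

end OrthogonalCommutant

end

/-- **Criterion for absolute irreducibility.**
Let `ρ` be an orthogonal representation of a group `G` on a nontrivial
finite-dimensional real inner product space `V`. If every orthogonal map
commuting with the representation is `±id`, then every linear map commuting
with the representation is a real scalar multiple of the identity, i.e. the
representation is absolutely irreducible. -/
theorem absolutely_irreducible_of_orthogonal_commutant
    {V : Type*} [NormedAddCommGroup V] [InnerProductSpace ℝ V]
    [FiniteDimensional ℝ V] [Nontrivial V]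
    {G : Type*} [Group G] (ρ : G →* (V ≃ₗᵢ[ℝ] V))
    (h : ∀ A : V ≃ₗᵢ[ℝ] V, (∀ (g : G) (v : V), A (ρ g v) = ρ g (A v)) →
      (∀ v, A v = v) ∨ (∀ v, A v = -v)) :
    ∀ B : V →ₗ[ℝ] V, (∀ (g : G) (v : V), B (ρ g v) = ρ g (B v)) →
      ∃ c : ℝ, B = c • LinearMap.id := by
  intro B hB
  have hBadj : ∀ g v, LinearMap.adjoint B (ρ g v) = ρ g (LinearMap.adjoint B v) := fun g =>
    LinearMap.adjoint_apply_comm (ρ g) (hB g)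
  obtain ⟨c, hc⟩ := (LinearMap.isSymmetric_adjoint_mul_self B).exists_eq_smul_id_of_comm h
    fun g v => by simp only [Module.End.mul_apply, hB, hBadj]
  exact exists_eq_smul_id_of_norm_apply_eq h hB (Real.sqrt_nonneg c)
    (LinearMap.norm_apply_eq_of_adjoint_mul_self_eq hc)
end

section
/- Let m ≥ 3 be an odd integer. Then the automorphism [e_m, i] of ℍ, x ↦ ē_m·x·i, has order exactly 4m as an element of the group of ℝ-linear automorphisms of ℍ. -/
/-! Since `e_m` and `i` lie in the commutative subalgebra `ℂ ⊂ ℍ`, the `n`-th power of `[e_m, i]`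
is `x ↦ ē_mⁿ x iⁿ`. It is the identity when `e_m^n = i^n = 1`, e.g. for `n = 4m`. Conversely,
evaluating at `x = 1` gives `(ē_m i)ⁿ = 1`, and `ē_m i = exp(2πi (m - 2)/4m)` is a primitive
`4m`-th root of unity because `m - 2` is coprime to `4m` for odd `m`. -/

noncomputable section

open Quaternion Real

/-- The quaternion `i`. -/
def qi : Quaternion ℝ := ⟨0, 1, 0, 0⟩
/-- The quaternion `j`. -/
def qj : Quaternion ℝ := ⟨0, 0, 1, 0⟩
/-- The quaternion `k`. -/
def qk : Quaternion ℝ := ⟨0, 0, 0, 1⟩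
/-- The unit quaternion `e_s = cos(π/s) + sin(π/s) i`. -/
def es (s : ℕ) : Quaternion ℝ := ⟨Real.cos (Real.pi / s), Real.sin (Real.pi / s), 0, 0⟩

lemma norm_eq_one_of_normSq {a : Quaternion ℝ} (h : Quaternion.normSq a = 1) : ‖a‖ = 1 := by
  have h2 : ‖a‖ * ‖a‖ = 1 := by rw [← Quaternion.normSq_eq_norm_mul_self, h]
  rcases mul_self_eq_one_iff.1 h2 with h' | h'
  · exact h'
  · nlinarith [norm_nonneg a]

lemma norm_qi : ‖qi‖ = 1 := norm_eq_one_of_normSq (by rw [Quaternion.normSq_def']; simp [qi])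
lemma norm_qj : ‖qj‖ = 1 := norm_eq_one_of_normSq (by rw [Quaternion.normSq_def']; simp [qj])
lemma norm_qk : ‖qk‖ = 1 := norm_eq_one_of_normSq (by rw [Quaternion.normSq_def']; simp [qk])
lemma norm_es (s : ℕ) : ‖es s‖ = 1 :=
  norm_eq_one_of_normSq (by
    rw [Quaternion.normSq_def']
    simp only [es]
    simp [Real.sin_sq_add_cos_sq, Real.cos_sq_add_sin_sq])

lemma self_mul_star_of_norm_one {a : Quaternion ℝ} (h : ‖a‖ = 1) : a * star a = 1 := by
  rw [Quaternion.self_mul_star]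
  have h1 : Quaternion.normSq a = 1 := by rw [Quaternion.normSq_eq_norm_mul_self, h, mul_one]
  rw [h1]; norm_num

lemma star_mul_self_of_norm_one {a : Quaternion ℝ} (h : ‖a‖ = 1) : star a * a = 1 := by
  rw [Quaternion.star_mul_self]
  have h1 : Quaternion.normSq a = 1 := by rw [Quaternion.normSq_eq_norm_mul_self, h, mul_one]
  rw [h1]; norm_num

/-- The rotation `[l,r] : x ↦ l̄ x r` of `ℝ⁴ ≅ ℍ`, for unit quaternions `l, r`. -/
def qrot (l r : Quaternion ℝ) (hl : ‖l‖ = 1) (hr : ‖r‖ = 1) :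
    Quaternion ℝ ≃ₗ[ℝ] Quaternion ℝ where
  toFun x := star l * x * r
  invFun x := l * x * star r
  map_add' x y := by noncomm_ring
  map_smul' c x := by simp [mul_smul_comm, smul_mul_assoc]
  left_inv x := by
    have h : l * (star l * x * r) * star r = (l * star l) * x * (r * star r) := by noncomm_ring
    simp [h, self_mul_star_of_norm_one hl, self_mul_star_of_norm_one hr]
  right_inv x := by
    have h : star l * (l * x * star r) * r = (star l * l) * x * (star r * r) := by noncomm_ring
    simp [h, star_mul_self_of_norm_one hl, star_mul_self_of_norm_one hr]

theorem Quaternion.commute_star_left {R : Type*} [CommRing R] {a b : ℍ[R]} (h : Commute a b) :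
    Commute (star a) b := by
  rw [star_eq_two_re_sub]
  exact (coe_commute _ b).sub_left h

theorem qrot_pow_apply (l r : ℍ) (hl : ‖l‖ = 1) (hr : ‖r‖ = 1) (n : ℕ) (x : ℍ) :
    (qrot l r hl hr ^ n) x = star (l ^ n) * x * r ^ n := by
  induction n generalizing x with
  | zero => simp
  | succ k ih =>
    rw [pow_succ, LinearEquiv.mul_apply, ih, star_pow, star_pow, pow_succ, pow_succ']
    simp only [qrot, LinearEquiv.coe_mk, LinearMap.coe_mk, AddHom.coe_mk, mul_assoc]

theorem qrot_pow_eq_one {l r : ℍ} (hl : ‖l‖ = 1) (hr : ‖r‖ = 1) {n : ℕ}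
    (hln : l ^ n = 1) (hrn : r ^ n = 1) : qrot l r hl hr ^ n = 1 :=
  LinearEquiv.ext fun x => by simp [qrot_pow_apply, hln, hrn]

theorem star_mul_pow_eq_one_of_qrot_pow_eq_one {l r : ℍ} (hl : ‖l‖ = 1) (hr : ‖r‖ = 1)
    (hlr : Commute l r) {n : ℕ} (h : qrot l r hl hr ^ n = 1) : (star l * r) ^ n = 1 := by
  have h1 : (qrot l r hl hr ^ n) 1 = 1 := by rw [h]; rfl
  rw [qrot_pow_apply, mul_one, star_pow] at h1
  rwa [(Quaternion.commute_star_left hlr).mul_pow]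

theorem orderOf_star_mul_dvd_orderOf_qrot {l r : ℍ} (hl : ‖l‖ = 1) (hr : ‖r‖ = 1)
    (hlr : Commute l r) : orderOf (star l * r) ∣ orderOf (qrot l r hl hr) :=
  orderOf_dvd_of_pow_eq_one
    (star_mul_pow_eq_one_of_qrot_pow_eq_one hl hr hlr (pow_orderOf_eq_one _))

theorem Int.isCoprime_sub_two_four_mul {z : ℤ} (hz : Odd z) : IsCoprime (z - 2) (4 * z) := by
  have h2 : IsCoprime (z - 2) 2 := Int.isCoprime_two_right.2 (by simpa using hz.sub_even even_two)
  have h4 : IsCoprime (z - 2) 4 := by simpa using h2.pow_right (n := 2)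
  have hz' : IsCoprime (z - 2) z := by
    simpa using (IsCoprime.add_mul_left_right_iff (z := 1)).2 h2
  exact h4.mul_right hz'

open Complex

theorem coeComplex_exp_ofReal_mul_I (θ : ℝ) :
    ((exp (θ * I) : ℂ) : ℍ) = ⟨Real.cos θ, Real.sin θ, 0, 0⟩ := by
  ext <;> simp [exp_ofReal_mul_I_re, exp_ofReal_mul_I_im]

theorem es_eq_coeComplex (s : ℕ) : es s = ((exp ((π / s : ℝ) * I) : ℂ) : ℍ) := by
  rw [coeComplex_exp_ofReal_mul_I, es]

theorem qi_eq_coeComplex : qi = ((I : ℂ) : ℍ) := by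
  ext <;> simp [qi]

theorem commute_es_qi (s : ℕ) : Commute (es s) qi := by
  rw [es_eq_coeComplex, qi_eq_coeComplex, ← coe_ofComplex]
  exact (Commute.all _ _).map _

theorem es_pow_two_mul_self {s : ℕ} (hs : s ≠ 0) : es s ^ (2 * s) = 1 := by
  have harg : ((2 * s : ℕ) : ℂ) * ((π / s : ℝ) * I) = 2 * π * I := by
    push_cast
    field_simp
  rw [es_eq_coeComplex, ← coe_ofComplex, ← map_pow, ← Complex.exp_nat_mul, harg,
    exp_two_pi_mul_I, map_one]

theorem qi_pow_four : qi ^ 4 = 1 := by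
  rw [qi_eq_coeComplex, ← coe_ofComplex, ← map_pow, I_pow_four, map_one]

theorem star_es_mul_qi {s : ℕ} (hs : s ≠ 0) :
    star (es s) * qi = ((exp (2 * π * I * (((s - 2 : ℤ) : ℂ) / ((4 * s : ℕ) : ℂ))) : ℂ) : ℍ) := by
  have harg : 2 * π * I * (((s - 2 : ℤ) : ℂ) / ((4 * s : ℕ) : ℂ)) =
      ((π / 2 - π / s : ℝ) : ℂ) * I := by
    push_cast
    field_simp
    ring
  rw [harg, coeComplex_exp_ofReal_mul_I, Real.cos_pi_div_two_sub, Real.sin_pi_div_two_sub]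
  ext <;>
    simp only [Quaternion.re_mul, Quaternion.imI_mul, Quaternion.imJ_mul, Quaternion.imK_mul,
      Quaternion.re_star, Quaternion.imI_star, Quaternion.imJ_star, Quaternion.imK_star] <;>
    simp [es, qi]

theorem orderOf_star_es_mul_qi {m : ℕ} (hm : Odd m) : orderOf (star (es m) * qi) = 4 * m := by
  have hcop : IsCoprime ((m : ℤ) - 2) ((4 * m : ℕ) : ℤ) := by
    push_cast
    exact Int.isCoprime_sub_two_four_mul hm.natCast
  rw [star_es_mul_qi hm.pos.ne']
  exact (orderOf_injective Quaternion.ofComplex.toRingHom.toMonoidHom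
    Quaternion.ofComplex.toRingHom.injective _).trans
    (isPrimitiveRoot_exp_of_isCoprime _ _ (by simpa using hm.pos.ne') hcop).eq_orderOf.symm

theorem orderOf_em_i_general (m : ℕ) (hodd : Odd m) :
    orderOf (qrot (es m) qi (norm_es m) norm_qi) = 4 * m := by
  have hes : es m ^ (4 * m) = 1 := by
    rw [show 4 * m = 2 * m * 2 by ring, pow_mul, es_pow_two_mul_self hodd.pos.ne', one_pow]
  have hqi : qi ^ (4 * m) = 1 := by
    rw [pow_mul, qi_pow_four, one_pow]
  apply Nat.dvd_antisymm (orderOf_dvd_of_pow_eq_one (qrot_pow_eq_one _ _ hes hqi))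
  rw [← orderOf_star_es_mul_qi hodd]
  exact orderOf_star_mul_dvd_orderOf_qrot _ _ (commute_es_qi m)

/-- The element `[e_m, i]` has order exactly `4m` in the group of `ℝ`-linear
automorphisms of `ℍ`. -/
theorem orderOf_em_i (m : ℕ) (hm : 3 ≤ m) (hodd : Odd m) :
    orderOf (qrot (es m) qi (norm_es m) norm_qi) = 4 * m :=
  orderOf_em_i_general m hodd
end
end

section
/- Let m ≥ 3 be an odd integer. The elements σ₁ := [i,j] and σ₂ := [e_{2m}·j, j·e₄] both belong to G₂(m), both satisfy σ ∘ σ = id with σ ≠ id (they are involutions), and they are not conjugate in G₂(m): there is no h ∈ G₂(m) with h·σ₁·h⁻¹ = σ₂. Hence G₂(m) has at least two distinct conjugacy classes of order-two elements with nonzero fixed vectors. -/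
noncomputable section

open Quaternion Real

/-- The group `G₁(m)`. -/
def G1 (m : ℕ) : Subgroup (Quaternion ℝ ≃ₗ[ℝ] Quaternion ℝ) :=
  Subgroup.closure
    {qrot (es m) 1 (norm_es m) norm_one,
     qrot 1 qi norm_one norm_qi,
     qrot 1 qj norm_one norm_qj,
     qrot qj (es 4) norm_qj (norm_es 4)}

/-- The group `G₂(m)`. -/
def G2 (m : ℕ) : Subgroup (Quaternion ℝ ≃ₗ[ℝ] Quaternion ℝ) :=
  Subgroup.closure
    {qrot (es m) 1 (norm_es m) norm_one,
     qrot 1 qi norm_one norm_qi,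
     qrot (es (2 * m)) qj (norm_es (2 * m)) norm_qj,
     qrot qj (es 4) norm_qj (norm_es 4)}

/-- The group `G₃(m)`. -/
def G3 (m : ℕ) : Subgroup (Quaternion ℝ ≃ₗ[ℝ] Quaternion ℝ) :=
  Subgroup.closure
    {qrot (es m) 1 (norm_es m) norm_one,
     qrot 1 qi norm_one norm_qi,
     qrot qj 1 norm_qj norm_one,
     qrot 1 qj norm_one norm_qj}

/-- The group `F₁(m)`. -/
def F1 (m : ℕ) : Subgroup (Quaternion ℝ ≃ₗ[ℝ] Quaternion ℝ) :=
  Subgroup.closure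
    {qrot (es m) qi (norm_es m) norm_qi,
     qrot 1 qj norm_one norm_qj}

/-- The involution `σ₁ = [i, j]`. -/
def sigma1 : Quaternion ℝ ≃ₗ[ℝ] Quaternion ℝ := qrot qi qj norm_qi norm_qj

/-- The involution `σ₂ = [e_{2m}·j, j·e₄]`. -/
def sigma2 (m : ℕ) : Quaternion ℝ ≃ₗ[ℝ] Quaternion ℝ :=
  qrot (es (2 * m) * qj) (qj * es 4)
    (by rw [norm_mul, norm_es, norm_qj, one_mul])
    (by rw [norm_mul, norm_qj, norm_es, one_mul])

/-! The map `(l, r) ↦ [l, r]` has kernel `{±(1, 1)}`. Hence for purely imaginary unit `l, r`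
the rotation `[l, r]` squares to `[-1, -1] = 1` but is not `±1`, so it is an involution with a
nonzero fixed vector. Every generator of `G₂(m)` is a rotation `[l, r]` whose left factor commutes
or anticommutes with `i`, a property stable under products and inverses; so every conjugate of
`σ₁ = [i, j]` in `G₂(m)` is some `[±i, b]`, which is not `σ₂ = [e_{2m} j, j e₄]`. For odd
`m = 2t + 1`, `σ₁ = [e_{2m}, j]^m [e_m, 1]^{mt} = [(-1)^t i, (-1)^t j]` lies in `G₂(m)`. -/

@[simp] lemma re_qi : qi.re = 0 := rfl
@[simp] lemma imI_qi : qi.imI = 1 := rfl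
@[simp] lemma imJ_qi : qi.imJ = 0 := rfl
@[simp] lemma imK_qi : qi.imK = 0 := rfl
@[simp] lemma re_qj : qj.re = 0 := rfl
@[simp] lemma imI_qj : qj.imI = 0 := rfl
@[simp] lemma imJ_qj : qj.imJ = 1 := rfl
@[simp] lemma imJ_es (s : ℕ) : (es s).imJ = 0 := rfl
@[simp] lemma imK_es (s : ℕ) : (es s).imK = 0 := rfl

lemma qi_eq_ofComplex : qi = ofComplex Complex.I := by
  ext <;> simp

lemma es_eq_ofComplex (s : ℕ) : es s = ofComplex (Complex.exp (↑(π / s) * Complex.I)) := by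
  ext
  · exact (Complex.exp_ofReal_mul_I_re _).symm
  · exact (Complex.exp_ofReal_mul_I_im _).symm
  · rfl
  · rfl

lemma es_pow_self {s : ℕ} (hs : s ≠ 0) : es s ^ s = -1 := by
  rw [es_eq_ofComplex, ← map_pow, ← Complex.exp_nat_mul]
  have : (s : ℂ) * (↑(π / s) * Complex.I) = π * Complex.I := by
    push_cast; field_simp
  rw [this, Complex.exp_pi_mul_I, map_neg, map_one]

lemma es_two_mul_pow_self {s : ℕ} (hs : s ≠ 0) : es (2 * s) ^ s = qi := by
  rw [es_eq_ofComplex, ← map_pow, ← Complex.exp_nat_mul, qi_eq_ofComplex]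
  have : (s : ℂ) * (↑(π / ↑(2 * s)) * Complex.I) = π / 2 * Complex.I := by
    push_cast; field_simp
  rw [this, Complex.exp_pi_div_two_mul_I]

lemma commute_qi_es (s : ℕ) : Commute qi (es s) := by
  rw [qi_eq_ofComplex, es_eq_ofComplex]
  exact (Commute.all _ _).map ofComplex

lemma qi_mul_qj : qi * qj = -(qj * qi) := by
  ext <;> simp

lemma mul_self_eq_neg_one {x : ℍ} (hre : x.re = 0) (hx : ‖x‖ = 1) : x * x = -1 := by
  rw [← neg_neg (x * x), ← mul_neg, ← star_eq_neg.2 hre, self_mul_star_of_norm_one hx]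

lemma eq_coe_re_of_commute {p : ℍ} (hi : Commute p qi) (hj : Commute p qj) : p = p.re := by
  have hi' := congrArg (fun q : ℍ => (q.imJ, q.imK)) hi.eq
  have hj' := congrArg (fun q : ℍ => q.imK) hj.eq
  ext <;> simp at hi' hj' ⊢ <;> linarith

lemma LinearEquiv.exists_ne_zero_apply_eq_self {R M : Type*} [Semiring R] [AddCommGroup M]
    [Module R M] {g : M ≃ₗ[R] M} (hg : g * g = 1) {x : M} (hx : g x ≠ -x) :
    ∃ y, y ≠ 0 ∧ g y = y := by
  refine ⟨x + g x, fun h => hx (eq_neg_of_add_eq_zero_right h), ?_⟩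
  rw [map_add, ← LinearEquiv.mul_apply, hg]
  exact add_comm _ _

section Rotations

variable {l r a b : ℍ} {hl : ‖l‖ = 1} {hr : ‖r‖ = 1} {ha : ‖a‖ = 1} {hb : ‖b‖ = 1}

lemma qrot_apply (x : ℍ) : qrot l r hl hr x = star l * x * r := rfl

lemma qrot_mul : qrot l r hl hr * qrot a b ha hb =
    qrot (a * l) (b * r) (by rw [norm_mul, ha, hl, one_mul]) (by rw [norm_mul, hb, hr, one_mul]) :=
  LinearEquiv.ext fun x => by simp [qrot_apply, mul_assoc]

lemma qrot_one_one : qrot 1 1 norm_one norm_one = 1 :=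
  LinearEquiv.ext fun x => by simp [qrot_apply]

lemma qrot_inv :
    (qrot l r hl hr)⁻¹ = qrot (star l) (star r) (by rwa [norm_star]) (by rwa [norm_star]) :=
  LinearEquiv.ext fun x => by rw [qrot_apply, star_star]; rfl

lemma qrot_pow (n : ℕ) : qrot l r hl hr ^ n =
    qrot (l ^ n) (r ^ n) (by rw [norm_pow, hl, one_pow]) (by rw [norm_pow, hr, one_pow]) := by
  induction n with
  | zero => exact qrot_one_one.symm
  | succ n ih => rw [pow_succ', ih, qrot_mul]; simp only [pow_succ]

lemma qrot_neg_neg : qrot (-l) (-r) (by rwa [norm_neg]) (by rwa [norm_neg]) = qrot l r hl hr :=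
  LinearEquiv.ext fun x => by simp [qrot_apply]

/-- The quotient `a * star l` of two left factors of the same rotation is central, hence real,
hence `±1`. -/
lemma qrot_eq_qrot_iff :
    qrot l r hl hr = qrot a b ha hb ↔ (a = l ∧ b = r) ∨ (a = -l ∧ b = -r) := by
  refine ⟨fun h => ?_, ?_⟩
  · obtain ⟨p, hp⟩ : ∃ p, a * star l = p := ⟨_, rfl⟩
    have hpx : ∀ x, p * x * r = x * b := fun x => by
      have := congrArg (a * ·) (LinearEquiv.congr_fun h x)
      simpa only [qrot_apply, ← mul_assoc, self_mul_star_of_norm_one ha, one_mul, hp] using this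
    have hpr : p * r = b := by simpa using hpx 1
    have hcomm : ∀ x, Commute p x := fun x => by
      have hxr : p * x * r = x * p * r := by rw [hpx, ← hpr, mul_assoc]
      exact mul_right_cancel₀ (ne_zero_of_norm_ne_zero (hr.trans_ne one_ne_zero)) hxr
    have hsign : p = 1 ∨ p = -1 := by
      have hnorm : ‖p‖ = 1 := by rw [← hp, norm_mul, Quaternion.norm_star, ha, hl, one_mul]
      rw [eq_coe_re_of_commute (hcomm qi) (hcomm qj)] at hnorm ⊢
      rw [norm_coe, Real.norm_eq_abs] at hnorm
      rcases (abs_eq zero_le_one).1 hnorm with h1 | h1 <;> simp [h1]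
    have hal : a = p * l := by rw [← hp, mul_assoc, star_mul_self_of_norm_one hl, mul_one]
    rcases hsign with h1 | h1
    · exact .inl ⟨by rw [hal, h1, one_mul], by rw [← hpr, h1, one_mul]⟩
    · exact .inr ⟨by rw [hal, h1, neg_one_mul], by rw [← hpr, h1, neg_one_mul]⟩
  · rintro (⟨rfl, rfl⟩ | ⟨rfl, rfl⟩)
    · rfl
    · exact qrot_neg_neg.symm

lemma qrot_mul_self_of_re_eq_zero (hl0 : l.re = 0) (hr0 : r.re = 0) :
    qrot l r hl hr * qrot l r hl hr = 1 := by
  rw [qrot_mul, ← qrot_one_one, qrot_eq_qrot_iff]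
  simp [mul_self_eq_neg_one hl0 hl, mul_self_eq_neg_one hr0 hr]

lemma qrot_ne_qrot_one_of_re_eq_zero (hl0 : l.re = 0) {c : ℍ} (hc : ‖c‖ = 1) :
    qrot l r hl hr ≠ qrot 1 c norm_one hc := by
  rw [Ne, qrot_eq_qrot_iff]
  rintro (⟨h, -⟩ | ⟨h, -⟩) <;> simpa [hl0] using congrArg (·.re) h

lemma qrot_ne_one_of_re_eq_zero (hl0 : l.re = 0) : qrot l r hl hr ≠ 1 :=
  qrot_one_one ▸ qrot_ne_qrot_one_of_re_eq_zero hl0 norm_one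

lemma exists_qrot_apply_eq_self_of_re_eq_zero (hl0 : l.re = 0) (hr0 : r.re = 0) :
    ∃ x, x ≠ 0 ∧ qrot l r hl hr x = x := by
  have ⟨x, hx⟩ : ∃ x, qrot l r hl hr x ≠ -x := by
    by_contra! h
    refine qrot_ne_qrot_one_of_re_eq_zero (r := r) (hl := hl) (hr := hr) hl0 (c := -1) (by simp)
      (LinearEquiv.ext fun x => by simp [h, qrot_apply])
  exact LinearEquiv.exists_ne_zero_apply_eq_self (qrot_mul_self_of_re_eq_zero hl0 hr0) hx

lemma qrot_mul_qrot_mul_inv : qrot l r hl hr * qrot a b ha hb * (qrot l r hl hr)⁻¹ =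
    qrot (star l * a * l) (star r * b * r) (by simp [norm_mul, ha, hl])
      (by simp [norm_mul, hb, hr]) := by
  rw [qrot_inv, qrot_mul, qrot_mul]
  simp only [mul_assoc]

end Rotations

def SignCommute (a b : ℍ) : Prop := a * b = b * a ∨ a * b = -(b * a)

namespace SignCommute

variable {q l l' : ℍ}

lemma one_right : SignCommute q 1 := .inl (by simp)

lemma mul_right (h : SignCommute q l) (h' : SignCommute q l') : SignCommute q (l * l') := by
  rcases h with h | h <;> rcases h' with h' | h' <;> [left; right; right; left] <;>
    rw [← mul_assoc, h] <;> simp [mul_assoc, h']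

lemma star_right (hq : star q = -q) (h : SignCommute q l) : SignCommute q (star l) := by
  rcases h with h | h <;> [left; right] <;>
    simpa [hq, eq_comm, neg_eq_iff_eq_neg] using congrArg star h

lemma star_mul_mul_self (h : SignCommute q l) (hl : ‖l‖ = 1) :
    star l * q * l = q ∨ star l * q * l = -q := by
  rcases h with h | h
  · left; rw [mul_assoc, h, ← mul_assoc, star_mul_self_of_norm_one hl, one_mul]
  · right; rw [mul_assoc, h, mul_neg, ← mul_assoc, star_mul_self_of_norm_one hl, one_mul]

end SignCommute

def qrotSignCommuteQi : Subgroup (ℍ ≃ₗ[ℝ] ℍ) where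
  carrier := {g | ∃ l r hl hr, SignCommute qi l ∧ g = qrot l r hl hr}
  one_mem' := ⟨1, 1, norm_one, norm_one, SignCommute.one_right, qrot_one_one.symm⟩
  mul_mem' := by
    rintro _ _ ⟨l, r, hl, hr, h, rfl⟩ ⟨l', r', hl', hr', h', rfl⟩
    exact ⟨_, _, _, _, h'.mul_right h, qrot_mul⟩
  inv_mem' := by
    rintro _ ⟨l, r, hl, hr, h, rfl⟩
    exact ⟨_, _, _, _, h.star_right (star_eq_neg.2 re_qi), qrot_inv⟩

lemma G2_le_qrotSignCommuteQi (m : ℕ) : G2 m ≤ qrotSignCommuteQi := by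
  rw [G2, Subgroup.closure_le]
  rintro g (rfl | rfl | rfl | rfl)
  · exact ⟨_, _, _, _, .inl (commute_qi_es m).eq, rfl⟩
  · exact ⟨_, _, _, _, SignCommute.one_right, rfl⟩
  · exact ⟨_, _, _, _, .inl (commute_qi_es (2 * m)).eq, rfl⟩
  · exact ⟨_, _, _, _, .inr qi_mul_qj, rfl⟩

lemma sigma1_mem_G2 {m : ℕ} (hm : Odd m) : sigma1 ∈ G2 m := by
  have hm0 : m ≠ 0 := hm.pos.ne'
  obtain ⟨t, ht⟩ := hm
  have hqj : qj ^ m = (-1) ^ t * qj := by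
    rw [ht, pow_succ, pow_mul, sq, mul_self_eq_neg_one re_qj norm_qj]
  have hprod : qrot (es (2 * m)) qj (norm_es _) norm_qj ^ m *
      qrot (es m) 1 (norm_es m) norm_one ^ (m * t) = sigma1 := by
    rw [qrot_pow, qrot_pow, qrot_mul, sigma1, qrot_eq_qrot_iff, es_two_mul_pow_self hm0, pow_mul,
      es_pow_self hm0, hqj, one_pow, one_mul]
    rcases neg_one_pow_eq_or ℍ t with h | h <;> simp [h]
  rw [← hprod, G2]
  exact mul_mem (pow_mem (Subgroup.subset_closure (by simp)) m)
    (pow_mem (Subgroup.subset_closure (by simp)) (m * t))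

lemma sigma2_eq_mul (m : ℕ) : sigma2 m =
    qrot qj (es 4) norm_qj (norm_es 4) * qrot (es (2 * m)) qj (norm_es (2 * m)) norm_qj :=
  qrot_mul.symm

lemma sigma2_mem_G2 (m : ℕ) : sigma2 m ∈ G2 m := by
  rw [sigma2_eq_mul, G2]
  exact mul_mem (Subgroup.subset_closure (by simp)) (Subgroup.subset_closure (by simp))

lemma re_es_mul_qj (s : ℕ) : (es s * qj).re = 0 := by simp
lemma re_qj_mul_es (s : ℕ) : (qj * es s).re = 0 := by simp

lemma not_exists_mem_G2_conj_sigma1_eq_sigma2 (m : ℕ) :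
    ¬∃ h ∈ G2 m, h * sigma1 * h⁻¹ = sigma2 m := by
  rintro ⟨h, hG, hconj⟩
  obtain ⟨l, r, hl, hr, hli, rfl⟩ := G2_le_qrotSignCommuteQi m hG
  rw [sigma1, qrot_mul_qrot_mul_inv, sigma2, qrot_eq_qrot_iff] at hconj
  have himI : (es (2 * m) * qj).imI = 0 := by simp
  rcases hli.star_mul_mul_self hl with hi | hi <;>
    rcases hconj with ⟨ha, -⟩ | ⟨ha, -⟩ <;> simp [ha, hi] at himI

theorem G2_two_isotropy_classes_general (m : ℕ) (hodd : Odd m) :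
    sigma1 ∈ G2 m ∧ sigma2 m ∈ G2 m ∧
    sigma1 * sigma1 = 1 ∧ sigma1 ≠ 1 ∧
    sigma2 m * sigma2 m = 1 ∧ sigma2 m ≠ 1 ∧
    (∃ x : Quaternion ℝ, x ≠ 0 ∧ sigma1 x = x) ∧
    (∃ x : Quaternion ℝ, x ≠ 0 ∧ sigma2 m x = x) ∧
    ¬∃ h ∈ G2 m, h * sigma1 * h⁻¹ = sigma2 m :=
  ⟨sigma1_mem_G2 hodd, sigma2_mem_G2 m,
    qrot_mul_self_of_re_eq_zero re_qi re_qj, qrot_ne_one_of_re_eq_zero re_qi,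
    qrot_mul_self_of_re_eq_zero (re_es_mul_qj _) (re_qj_mul_es _),
    qrot_ne_one_of_re_eq_zero (re_es_mul_qj _),
    exists_qrot_apply_eq_self_of_re_eq_zero re_qi re_qj,
    exists_qrot_apply_eq_self_of_re_eq_zero (re_es_mul_qj _) (re_qj_mul_es _),
    not_exists_mem_G2_conj_sigma1_eq_sigma2 m⟩

/-- In `G₂(m)` the involutions `σ₁ = [i,j]` and `σ₂ = [e_{2m}j, je₄]` both have
nonzero fixed vectors but are not conjugate, so `G₂(m)` has at least two
conjugacy classes of order-two elements with nonzero fixed vectors. -/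
theorem G2_two_isotropy_classes (m : ℕ) (hm : 3 ≤ m) (hodd : Odd m) :
    sigma1 ∈ G2 m ∧ sigma2 m ∈ G2 m ∧
    sigma1 * sigma1 = 1 ∧ sigma1 ≠ 1 ∧
    sigma2 m * sigma2 m = 1 ∧ sigma2 m ≠ 1 ∧
    (∃ x : Quaternion ℝ, x ≠ 0 ∧ sigma1 x = x) ∧
    (∃ x : Quaternion ℝ, x ≠ 0 ∧ sigma2 m x = x) ∧
    ¬∃ h ∈ G2 m, h * sigma1 * h⁻¹ = sigma2 m :=
  G2_two_isotropy_classes_general m hodd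
end
end
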